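/- For any real n×n matrix H, the identity D L (H ⊗ H) D = (H ⊗ H) D holds, where L is the elimination matrix and D the duplication matrix; in particular, for symmetric S, L (H ⊗ H) D vech(S) = vech(H S Hᵀ). -/

import Mathlib

/-!
For symmetric `S` we have `D vech S = vec S`, `(H ⊗ H) vec S = vec (H S Hᵀ)` and `L vec X = vech X`,
and `H S Hᵀ` is again symmetric; chaining these gives the identity on `vech S`. Every vector
indexed by the lower triangle is `vech S` for some symmetric `S`, so the identity on all such
vectors is the matrix identity `D L (H ⊗ H) D = (H ⊗ H) D`.
-/

open Matrix Kronecker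

namespace Matrix

variable {ι m R : Type*}

theorem IsSymm.mul_mul_transpose [Fintype ι] [CommSemiring R] {S : Matrix ι ι R}
    (hS : S.IsSymm) (H : Matrix m ι R) : (H * S * Hᵀ).IsSymm := by
  rw [IsSymm, transpose_mul, transpose_mul, transpose_transpose, hS.eq, Matrix.mul_assoc]

variable [LinearOrder ι]

def vech (S : Matrix ι ι R) : {p : ι × ι // p.2 ≤ p.1} → R :=
  fun p => S p.1.1 p.1.2

def ofVech (v : {p : ι × ι // p.2 ≤ p.1} → R) : Matrix ι ι R :=
  fun i j => if h : j ≤ i then v ⟨(i, j), h⟩ else v ⟨(j, i), (not_le.mp h).le⟩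

theorem isSymm_ofVech (v : {p : ι × ι // p.2 ≤ p.1} → R) : (ofVech v).IsSymm := by
  refine IsSymm.ext fun i j => ?_
  rcases lt_trichotomy i j with hij | rfl | hij
  · simp [ofVech, hij.le, not_le.mpr hij]
  · rfl
  · simp [ofVech, hij.le, not_le.mpr hij]

@[simp]
theorem vech_ofVech (v : {p : ι × ι // p.2 ≤ p.1} → R) : vech (ofVech v) = v := by
  funext p
  simp [vech, ofVech, p.2]

theorem ext_of_mulVec_vech [Fintype ι] [NonAssocSemiring R]
    {M N : Matrix m {p : ι × ι // p.2 ≤ p.1} R}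
    (h : ∀ S : Matrix ι ι R, S.IsSymm → M *ᵥ vech S = N *ᵥ vech S) : M = N :=
  ext_iff_mulVec.mpr fun v => by simpa using h (ofVech v) (isSymm_ofVech v)

section DuplicationElimination

variable [Fintype ι] [CommSemiring R]
  (L : Matrix {p : ι × ι // p.2 ≤ p.1} (ι × ι) R) (D : Matrix (ι × ι) {p : ι × ι // p.2 ≤ p.1} R)
  (hL : ∀ X : Matrix ι ι R, L *ᵥ vec X = vech X)
  (hD : ∀ S : Matrix ι ι R, S.IsSymm → D *ᵥ vech S = vec S)
  (H : Matrix ι ι R)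

include hL hD in
theorem elimination_kronecker_duplication_mulVec_vech {S : Matrix ι ι R} (hS : S.IsSymm) :
    (L * (H ⊗ₖ H) * D) *ᵥ vech S = vech (H * S * Hᵀ) := by
  rw [← mulVec_mulVec, ← mulVec_mulVec, hD S hS, kronecker_mulVec_vec, hL]

include hL hD in
theorem duplication_elimination_kronecker_duplication :
    D * L * (H ⊗ₖ H) * D = (H ⊗ₖ H) * D := by
  refine ext_of_mulVec_vech fun S hS => ?_
  rw [Matrix.mul_assoc D L, Matrix.mul_assoc D, ← mulVec_mulVec,
    elimination_kronecker_duplication_mulVec_vech L D hL hD H hS, hD _ (hS.mul_mul_transpose H),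
    ← mulVec_mulVec, hD S hS, kronecker_mulVec_vec]

end DuplicationElimination

end Matrix

/-- Magnus–Neudecker identity `D L (H ⊗ H) D = (H ⊗ H) D` for the elimination matrix
`L` and duplication matrix `D`; in particular, for symmetric `S`,
`L (H ⊗ H) D · vech S = vech (H S Hᵀ)`. -/
theorem stmt16 {n : ℕ}
    (L : Matrix {p : Fin n × Fin n // p.2 ≤ p.1} (Fin n × Fin n) ℝ)
    (D : Matrix (Fin n × Fin n) {p : Fin n × Fin n // p.2 ≤ p.1} ℝ)
    (hL : ∀ X : Matrix (Fin n) (Fin n) ℝ,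
      (L *ᵥ fun q : Fin n × Fin n => X q.2 q.1)
        = fun p : {p : Fin n × Fin n // p.2 ≤ p.1} => X p.1.1 p.1.2)
    (hD : ∀ S : Matrix (Fin n) (Fin n) ℝ, S.IsSymm →
      (D *ᵥ fun p : {p : Fin n × Fin n // p.2 ≤ p.1} => S p.1.1 p.1.2)
        = fun q : Fin n × Fin n => S q.2 q.1)
    (H : Matrix (Fin n) (Fin n) ℝ) :
    D * L * (H ⊗ₖ H) * D = (H ⊗ₖ H) * D ∧
    ∀ S : Matrix (Fin n) (Fin n) ℝ, S.IsSymm →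
      ((L * (H ⊗ₖ H) * D) *ᵥ fun p : {p : Fin n × Fin n // p.2 ≤ p.1} => S p.1.1 p.1.2)
        = fun p : {p : Fin n × Fin n // p.2 ≤ p.1} => (H * S * Hᵀ) p.1.1 p.1.2 :=
  ⟨duplication_elimination_kronecker_duplication L D hL hD H,
    fun _ hS => elimination_kronecker_duplication_mulVec_vech L D hL hD H hS⟩
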